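/- arXiv:2007.01511 — 2 statements merged into one kernel-verified Lean document; each statement's English description precedes it below -/
import Mathlib

section
/- Let c̄_1,…,c̄_N ≥ 0, F > 0, r > 0 and 0 = T_0 < T_1 < ⋯ < T_N. If for some m with 1 ≤ m ≤ N−1 we have Σ_{j=m}^{N} c̄_j e^{r(T_N − T_j)} > (F − Σ_{j=1}^{m−1} c̄_j) · e^{r(T_N − T_m)}, then Σ_{j=m+1}^{N} c̄_j e^{r(T_N − T_j)} > (F − Σ_{j=1}^{m} c̄_j) · e^{r(T_N − T_{m+1})}. -/
open Finset Real

/-- Lemma 4: if keeping the risk-free coupon bond at date `T m` beats early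
redemption, the same holds at `T (m+1)`. -/
theorem coupon_keep_propagates
    (N : ℕ) (c : ℕ → ℝ) (F r : ℝ) (T : ℕ → ℝ)
    (hc : ∀ j, 1 ≤ j → j ≤ N → 0 ≤ c j)
    (hF : 0 < F) (hr : 0 < r)
    (hT0 : T 0 = 0) (hT : ∀ i j, i < j → j ≤ N → T i < T j)
    (m : ℕ) (hm1 : 1 ≤ m) (hmN : m ≤ N - 1)
    (h : (∑ j ∈ Finset.Icc m N, c j * Real.exp (r * (T N - T j))) >
      (F - ∑ j ∈ Finset.Icc 1 (m - 1), c j) * Real.exp (r * (T N - T m))) :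
    (∑ j ∈ Finset.Icc (m + 1) N, c j * Real.exp (r * (T N - T j))) >
      (F - ∑ j ∈ Finset.Icc 1 m, c j) * Real.exp (r * (T N - T (m + 1))) := by
  have hmN' : m + 1 ≤ N := by omega
  -- split the sums
  have hsplit1 : Finset.Icc m N = insert m (Finset.Icc (m + 1) N) := by
    ext x; simp; omega
  have hsplit2 : Finset.Icc 1 m = insert m (Finset.Icc 1 (m - 1)) := by
    ext x; simp; omega
  have hnm1 : m ∉ Finset.Icc (m + 1) N := by simp
  have hnm2 : m ∉ Finset.Icc 1 (m - 1) := by simp; omega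
  rw [hsplit1, Finset.sum_insert hnm1] at h
  rw [hsplit2, Finset.sum_insert hnm2]
  set A := ∑ j ∈ Finset.Icc 1 (m - 1), c j with hA
  set S := ∑ j ∈ Finset.Icc (m + 1) N, c j * Real.exp (r * (T N - T j)) with hS
  set Em := Real.exp (r * (T N - T m)) with hEm
  set Em1 := Real.exp (r * (T N - T (m + 1))) with hEm1
  have hSnn : 0 ≤ S := by
    apply Finset.sum_nonneg
    intro j hj
    simp only [Finset.mem_Icc] at hj
    exact mul_nonneg (hc j (by omega) hj.2) (Real.exp_pos _).le
  have hEpos : 0 < Em1 := Real.exp_pos _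
  have hElt : Em1 < Em := by
    apply Real.exp_lt_exp.mpr
    have := hT m (m + 1) (Nat.lt_succ_self m) hmN'
    nlinarith
  have hK : S > (F - A - c m) * Em := by nlinarith
  rcases le_or_gt 0 (F - A - c m) with hk | hk
  · have : (F - A - c m) * Em1 ≤ (F - A - c m) * Em :=
      mul_le_mul_of_nonneg_left hElt.le hk
    have := lt_of_le_of_lt this hK
    nlinarith
  · have : (F - A - c m) * Em1 < 0 := mul_neg_of_neg_of_pos hk hEpos
    nlinarith
end

section
/- Let c̄_1,…,c̄_N ≥ 0, F > 0, r > 0 and 0 = T_0 < T_1 < ⋯ < T_N. If Σ_{j=1}^{N} c̄_j e^{r(T_N − T_j)} > F · e^{r(T_N − T_1)}, then for every m with 1 ≤ m ≤ N−1 we have Σ_{j=m}^{N} c̄_j e^{r(T_N − T_j)} > (F − Σ_{j=1}^{m−1} c̄_j) · e^{r(T_N − T_m)}. -/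
open Finset Real

lemma sum_Icc_bot_split (f : ℕ → ℝ) {k N : ℕ} (h : k ≤ N) :
    ∑ j ∈ Finset.Icc k N, f j = f k + ∑ j ∈ Finset.Icc (k+1) N, f j := by
  rw [Finset.Icc_add_one_left_eq_Ioc, ← Finset.Ioc_insert_left h, Finset.sum_insert (by simp)]

/-- Corollary 2: condition (15) implies keeping the bond beats early
redemption at every coupon date. -/
theorem coupon_keep_all_dates
    (N : ℕ) (c : ℕ → ℝ) (F r : ℝ) (T : ℕ → ℝ)
    (hc : ∀ j, 1 ≤ j → j ≤ N → 0 ≤ c j)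
    (hF : 0 < F) (hr : 0 < r)
    (hT0 : T 0 = 0) (hT : ∀ i j, i < j → j ≤ N → T i < T j)
    (h : (∑ j ∈ Finset.Icc 1 N, c j * Real.exp (r * (T N - T j))) >
      F * Real.exp (r * (T N - T 1))) :
    ∀ m, 1 ≤ m → m ≤ N - 1 →
      (∑ j ∈ Finset.Icc m N, c j * Real.exp (r * (T N - T j))) >
        (F - ∑ j ∈ Finset.Icc 1 (m - 1), c j) * Real.exp (r * (T N - T m)) := by
  intro m
  induction m with
  | zero => omega
  | succ k ih =>
    intro _ hm2
    have hN2 : 2 ≤ N := by omega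
    rcases Nat.eq_zero_or_pos k with hk0 | hk1
    · subst hk0
      simpa using h
    · -- inductive step
      have hkN : k ≤ N := by omega
      have hk1N : k + 1 ≤ N := by omega
      have ihk := ih hk1 (by omega)
      -- split the sum over Icc k N at k
      have hsplit := sum_Icc_bot_split (fun j => c j * Real.exp (r * (T N - T j))) hkN
      have hsplit2 : ∑ j ∈ Finset.Icc 1 k, c j =
          (∑ j ∈ Finset.Icc 1 (k - 1), c j) + c k := by
        have : k = (k - 1) + 1 := by omega
        rw [this, Finset.sum_Icc_succ_top (by omega)]
        simp
      have hsub : (k + 1 : ℕ) - 1 = k := by omega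
      rw [hsub, hsplit2]
      have key : ∑ j ∈ Finset.Icc (k+1) N, c j * Real.exp (r * (T N - T j)) >
          (F - ((∑ j ∈ Finset.Icc 1 (k - 1), c j) + c k)) * Real.exp (r * (T N - T k)) := by
        have := ihk
        rw [hsplit] at this
        linarith
      set S := (∑ j ∈ Finset.Icc 1 (k - 1), c j) + c k with hS
      have hexp_lt : Real.exp (r * (T N - T (k+1))) < Real.exp (r * (T N - T k)) := by
        apply Real.exp_lt_exp.mpr
        have : T k < T (k+1) := hT k (k+1) (by omega) hk1N
        nlinarith
      rcases le_or_gt 0 (F - S) with hpos | hneg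
      · calc (F - S) * Real.exp (r * (T N - T (k+1)))
            ≤ (F - S) * Real.exp (r * (T N - T k)) := by
              apply mul_le_mul_of_nonneg_left hexp_lt.le hpos
          _ < _ := key
      · have hsum0 : 0 ≤ ∑ j ∈ Finset.Icc (k+1) N, c j * Real.exp (r * (T N - T j)) := by
          apply Finset.sum_nonneg
          intro j hj
          simp only [Finset.mem_Icc] at hj
          exact mul_nonneg (hc j (by omega) hj.2) (Real.exp_pos _).le
        have : (F - S) * Real.exp (r * (T N - T (k+1))) < 0 :=
          mul_neg_of_neg_of_pos (by linarith) (Real.exp_pos _)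
        linarith
end
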